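/- arXiv:2112.09094 — 3 statements merged into one kernel-verified Lean document; each statement's English description precedes it below -/
import Mathlib

section
/- For any partition λ, the following product-exponential identity holds as an identity of formal power series in v^{-1}: N(v) · ∏_{(i,j)∈λ} (1 - v^{-1} t^{-i+1} q^{j-1})/(1 - v^{-1} t^{-i} q^{j}) = exp( Σ_{r>0} (1/r) · ((1-q^r t^{-r})/(1-q^r)) · v^{-r} t^r · ε_λ(p_r) ), where N(v) = exp( Σ_{r>0} (1/r) · (1-q^r t^{-r})/((1-q^r)(1-t^{-r})) · v^{-r} ) and ε_λ(p_r) = Σ_{i=1}^{ℓ(λ)} q^{λ_i r} t^{-ir} + t^{-(ℓ(λ)+1)r}/(1-t^{-r}). -/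
/-!
Take logarithms. Each factor of the product is `(1 - a) / (1 - b)` with `‖a‖, ‖b‖ < 1`, so its
logarithm is `∑ₘ (bᵐ⁺¹ - aᵐ⁺¹) / (m + 1)`, and both sides become exponentials of power series in
`v⁻¹`. Comparing coefficients, with `Q = q ^ r` and `S = t⁻¹ ^ r`, row `i` of the diagram
contributes the geometric sum `Sⁱ (QS - 1)(Q ^ λᵢ - 1)/(Q - 1)`; summing over the rows and adding
the coefficient `(1 - QS)/((1 - Q)(1 - S))` of `N` leaves `(1 - QS)/(1 - Q)` times
`∑ᵢ Q ^ λᵢ Sⁱ + Sˡ/(1 - S)`, which is the coefficient of the right-hand side.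
-/

open Finset

open Filter Topology in
theorem summable_mul_pow_of_tendsto {F : Type*} [NormedRing F] [CompleteSpace F] [NormOneClass F]
    [NormMulClass F] {u : ℕ → F} {a : F} (hu : Tendsto u atTop (𝓝 a)) {r : F} (hr : ‖r‖ < 1) :
    Summable fun n ↦ u n * r ^ n :=
  (summable_norm_mul_geometric_of_norm_lt_one' (k := 0) hr (by simpa using hu.isBigO_one F)).of_norm

theorem ne_one_of_norm_lt_one {E : Type*} [SeminormedRing E] [NormOneClass E] {z : E}
    (hz : ‖z‖ < 1) : z ≠ 1 :=
  fun h ↦ hz.ne (h ▸ norm_one)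

section Field

variable {K : Type*} [Field K]

theorem sum_range_mul_pow_succ_sub_pow {Q : K} (hQ : Q ≠ 1) (S : K) (n : ℕ) :
    ∑ j ∈ range n, (S * Q ^ (j + 1) - Q ^ j) = (S * Q - 1) * ((Q ^ n - 1) / (Q - 1)) := by
  rw [← geom_sum_eq hQ, mul_sum]
  exact sum_congr rfl fun j _ ↦ by ring

theorem div_add_sum_sum_pow_eq {Q S : K} (hQ : Q ≠ 1) (hS : S ≠ 1) (hS0 : S ≠ 0) (l : ℕ)
    (lam : ℕ → ℕ) :
    (1 - Q * S) / ((1 - Q) * (1 - S)) +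
        ∑ i ∈ range l, ∑ j ∈ range (lam i), (S ^ (i + 1) * Q ^ (j + 1) - S ^ i * Q ^ j)
      = (1 - Q * S) / (1 - Q) * S⁻¹ *
          (∑ i ∈ range l, Q ^ lam i * S ^ (i + 1) + S ^ (l + 1) / (1 - S)) := by
  have hrow : ∀ i, ∑ j ∈ range (lam i), (S ^ (i + 1) * Q ^ (j + 1) - S ^ i * Q ^ j)
      = S ^ i * ((S * Q - 1) * ((Q ^ lam i - 1) / (Q - 1))) := fun i ↦ by
    rw [← sum_range_mul_pow_succ_sub_pow hQ, mul_sum]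
    exact sum_congr rfl fun j _ ↦ by ring
  have hcol : ∑ i ∈ range l, S ^ i * ((S * Q - 1) * ((Q ^ lam i - 1) / (Q - 1)))
      = (S * Q - 1) / (Q - 1) * (∑ i ∈ range l, S ^ i * Q ^ lam i - (S ^ l - 1) / (S - 1)) := by
    rw [← geom_sum_eq hS, ← sum_sub_distrib, mul_sum]
    exact sum_congr rfl fun i _ ↦ by ring
  have hshift : ∑ i ∈ range l, Q ^ lam i * S ^ (i + 1) = S * ∑ i ∈ range l, S ^ i * Q ^ lam i := by
    rw [mul_sum]
    exact sum_congr rfl fun i _ ↦ by ring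
  rw [sum_congr rfl fun i _ ↦ hrow i, hcol, hshift]
  have hQ' : Q - 1 ≠ 0 := sub_ne_zero.mpr hQ
  have hS' : S - 1 ≠ 0 := sub_ne_zero.mpr hS
  field_simp
  ring

theorem inv_mul_coeff_add_sum_sum_eq {q T : K} {r : ℕ} (hq : q ^ r ≠ 1) (hT : T ^ r ≠ 1)
    (hT0 : T ≠ 0) (x d : K) (l : ℕ) (lam : ℕ → ℕ) :
    d⁻¹ * ((1 - q ^ r * T ^ r) / ((1 - q ^ r) * (1 - T ^ r))) * x ^ r +
        ∑ i ∈ range l, ∑ j ∈ range (lam i),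
          ((x * T ^ (i + 1) * q ^ (j + 1)) ^ r - (x * T ^ i * q ^ j) ^ r) / d
      = d⁻¹ * ((1 - q ^ r * T ^ r) / (1 - q ^ r)) * x ^ r * T⁻¹ ^ r *
          (∑ i ∈ range l, q ^ (lam i * r) * T ^ ((i + 1) * r) + T ^ ((l + 1) * r) / (1 - T ^ r)) := by
  have hpow : ∀ a b, (x * T ^ a * q ^ b) ^ r = x ^ r * ((T ^ r) ^ a * (q ^ r) ^ b) := fun a b ↦ by
    rw [mul_pow, mul_pow, pow_right_comm T, pow_right_comm q, mul_assoc]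
  simp only [hpow, ← mul_sub, mul_div_right_comm _ _ d, ← mul_sum, pow_mul', inv_pow]
  linear_combination (x ^ r / d) * div_add_sum_sum_pow_eq hq hT (pow_ne_zero r hT0) l lam

end Field

theorem norm_mul_pow_mul_pow_lt_one {𝕜 : Type*} [NormedDivisionRing 𝕜] {x T q : 𝕜} (hx : ‖x‖ < 1) (hT : ‖T‖ ≤ 1) (hq : ‖q‖ ≤ 1)
    (i j : ℕ) : ‖x * T ^ i * q ^ j‖ < 1 := by
  rw [norm_mul, norm_mul, norm_pow, norm_pow]
  calc ‖x‖ * ‖T‖ ^ i * ‖q‖ ^ j ≤ ‖x‖ :=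
        mul_le_of_le_one_right (by positivity) (pow_le_one₀ (norm_nonneg q) hq) |>.trans
          (mul_le_of_le_one_right (norm_nonneg x) (pow_le_one₀ (norm_nonneg T) hT))
    _ < 1 := hx

section LogSeries

open Complex

variable {ι κ : Type*} (s : Finset ι) (u : ι → Finset κ) {a b : ι → κ → ℂ}

theorem hasSum_sum_sum_pow_succ_sub_div (ha : ∀ i ∈ s, ∀ j ∈ u i, ‖a i j‖ < 1)
    (hb : ∀ i ∈ s, ∀ j ∈ u i, ‖b i j‖ < 1) :
    HasSum (fun m : ℕ ↦ ∑ i ∈ s, ∑ j ∈ u i, (b i j ^ (m + 1) - a i j ^ (m + 1)) / (m + 1))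
      (∑ i ∈ s, ∑ j ∈ u i, (log (1 - a i j) - log (1 - b i j))) :=
  hasSum_sum fun i hi ↦ hasSum_sum fun j hj ↦ by
    simpa only [sub_div, neg_sub_neg] using
      (hasSum_taylorSeries_neg_log' (hb i hi j hj)).sub
        (hasSum_taylorSeries_neg_log' (ha i hi j hj))

theorem exp_sum_sum_log_one_sub_sub (ha : ∀ i ∈ s, ∀ j ∈ u i, a i j ≠ 1)
    (hb : ∀ i ∈ s, ∀ j ∈ u i, b i j ≠ 1) :
    exp (∑ i ∈ s, ∑ j ∈ u i, (log (1 - a i j) - log (1 - b i j)))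
      = ∏ i ∈ s, ∏ j ∈ u i, (1 - a i j) / (1 - b i j) := by
  simp only [exp_sum]
  refine prod_congr rfl fun i hi ↦ prod_congr rfl fun j hj ↦ ?_
  rw [exp_sub, exp_log (sub_ne_zero.mpr (ha i hi j hj).symm),
    exp_log (sub_ne_zero.mpr (hb i hi j hj).symm)]

end LogSeries

open Filter Topology in
theorem summable_inv_mul_coeff_mul_pow {q T x : ℂ} (hq : ‖q‖ < 1) (hT : ‖T‖ < 1) (hx : ‖x‖ < 1) :
    Summable fun m : ℕ ↦ ((m : ℂ) + 1)⁻¹ *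
      ((1 - q ^ (m + 1) * T ^ (m + 1)) / ((1 - q ^ (m + 1)) * (1 - T ^ (m + 1)))) * x ^ (m + 1) := by
  have hpow : ∀ {z : ℂ}, ‖z‖ < 1 → Tendsto (fun m : ℕ ↦ z ^ (m + 1)) atTop (𝓝 0) := fun hz ↦
    (tendsto_pow_atTop_nhds_zero_of_norm_lt_one hz).comp (tendsto_add_atTop_nat 1)
  have hinv : Tendsto (fun m : ℕ ↦ ((m : ℂ) + 1)⁻¹) atTop (𝓝 0) := by
    simpa only [one_div] using tendsto_one_div_add_atTop_nhds_zero_nat (𝕜 := ℂ)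
  have hone : Tendsto (fun _ : ℕ ↦ (1 : ℂ)) atTop (𝓝 1) := tendsto_const_nhds
  have hcoeff := hinv.mul <| (hone.sub ((hpow hq).mul (hpow hT))).div
    ((hone.sub (hpow hq)).mul (hone.sub (hpow hT))) (by norm_num)
  exact ((summable_mul_pow_of_tendsto hcoeff hx).mul_right x).congr fun m ↦ by
    simp only [Pi.div_apply]
    ring

theorem N_times_product_eq_exp_general (q t v : ℂ) (hq : ‖q‖ < 1) (ht : ‖t⁻¹‖ < 1) (ht0 : t ≠ 0)
    (hv : ‖v⁻¹‖ < 1) (l : ℕ) (lam : ℕ → ℕ) :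
    Complex.exp (∑' m : ℕ, ((m : ℂ) + 1)⁻¹ *
          ((1 - q ^ (m + 1) * (t⁻¹) ^ (m + 1)) /
            ((1 - q ^ (m + 1)) * (1 - (t⁻¹) ^ (m + 1)))) * (v⁻¹) ^ (m + 1)) *
        ∏ i ∈ range l, ∏ j ∈ range (lam i),
          (1 - v⁻¹ * (t⁻¹) ^ i * q ^ j) / (1 - v⁻¹ * (t⁻¹) ^ (i + 1) * q ^ (j + 1))
      = Complex.exp (∑' m : ℕ, ((m : ℂ) + 1)⁻¹ *
          ((1 - q ^ (m + 1) * (t⁻¹) ^ (m + 1)) / (1 - q ^ (m + 1))) *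
          (v⁻¹) ^ (m + 1) * t ^ (m + 1) *
          ((∑ i ∈ range l, q ^ (lam i * (m + 1)) * (t⁻¹) ^ ((i + 1) * (m + 1))) +
            (t⁻¹) ^ ((l + 1) * (m + 1)) / (1 - (t⁻¹) ^ (m + 1)))) := by
  have hx : ∀ i j : ℕ, ‖v⁻¹ * t⁻¹ ^ i * q ^ j‖ < 1 :=
    norm_mul_pow_mul_pow_lt_one hv ht.le hq.le
  have hN := summable_inv_mul_coeff_mul_pow hq ht hv
  have hlog := hasSum_sum_sum_pow_succ_sub_div (range l) (fun i ↦ range (lam i))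
    (a := fun i j ↦ v⁻¹ * t⁻¹ ^ i * q ^ j) (b := fun i j ↦ v⁻¹ * t⁻¹ ^ (i + 1) * q ^ (j + 1))
    (fun _ _ _ _ ↦ hx _ _) (fun _ _ _ _ ↦ hx _ _)
  rw [← exp_sum_sum_log_one_sub_sub _ _ (fun _ _ _ _ ↦ ne_one_of_norm_lt_one (hx _ _))
    (fun _ _ _ _ ↦ ne_one_of_norm_lt_one (hx _ _)),
    ← Complex.exp_add, ← (hN.hasSum.add hlog).tsum_eq]
  congr 1
  refine tsum_congr fun m ↦ ?_
  have hpow : ∀ {z : ℂ}, ‖z‖ < 1 → z ^ (m + 1) ≠ 1 := fun hz ↦ ne_one_of_norm_lt_one <|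
    (norm_pow _ _).trans_lt (pow_lt_one₀ (norm_nonneg _) hz m.succ_ne_zero)
  simpa only [inv_inv] using
    inv_mul_coeff_add_sum_sum_eq (hpow hq) (hpow ht) (inv_ne_zero ht0) v⁻¹ ((m : ℂ) + 1) l lam

/-- For any partition `λ` (length `l`, parts `lam`), with `|q|, |t⁻¹|, |v⁻¹| < 1`:
`N(v) · ∏_{(i,j)∈λ} (1 - v⁻¹ t^{-i+1} q^{j-1})/(1 - v⁻¹ t^{-i} q^{j})
  = exp( Σ_{r>0} (1/r) ((1-q^r t^{-r})/(1-q^r)) v^{-r} t^r ε_λ(p_r) )`,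
where `N(v) = exp( Σ_{r>0} (1/r) (1-q^r t^{-r})/((1-q^r)(1-t^{-r})) v^{-r} )` and
`ε_λ(p_r) = Σ_{i=1}^{ℓ(λ)} q^{λ_i r} t^{-ir} + t^{-(ℓ(λ)+1)r}/(1-t^{-r})`. -/
theorem N_times_product_eq_exp (q t v : ℂ) (hq : ‖q‖ < 1) (ht : ‖t⁻¹‖ < 1) (ht0 : t ≠ 0)
    (hv : ‖v⁻¹‖ < 1) (l : ℕ) (lam : ℕ → ℕ)
    (hmono : ∀ i j, i ≤ j → lam j ≤ lam i) (hvan : ∀ i, l ≤ i → lam i = 0) :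
    Complex.exp (∑' m : ℕ, ((m : ℂ) + 1)⁻¹ *
          ((1 - q ^ (m + 1) * (t⁻¹) ^ (m + 1)) /
            ((1 - q ^ (m + 1)) * (1 - (t⁻¹) ^ (m + 1)))) * (v⁻¹) ^ (m + 1)) *
        ∏ i ∈ range l, ∏ j ∈ range (lam i),
          (1 - v⁻¹ * (t⁻¹) ^ i * q ^ j) / (1 - v⁻¹ * (t⁻¹) ^ (i + 1) * q ^ (j + 1))
      = Complex.exp (∑' m : ℕ, ((m : ℂ) + 1)⁻¹ *
          ((1 - q ^ (m + 1) * (t⁻¹) ^ (m + 1)) / (1 - q ^ (m + 1))) *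
          (v⁻¹) ^ (m + 1) * t ^ (m + 1) *
          ((∑ i ∈ range l, q ^ (lam i * (m + 1)) * (t⁻¹) ^ ((i + 1) * (m + 1))) +
            (t⁻¹) ^ ((l + 1) * (m + 1)) / (1 - (t⁻¹) ^ (m + 1)))) :=
  N_times_product_eq_exp_general q t v hq ht ht0 hv l lam
end

section
/- The rational function F_n(z_1,...,z_n) = α^n ∏_{1≤i≠j≤n} ζ(z_i/z_j), where α = (1-qt^{-1})/((1-q)(1-t^{-1})) and ζ(x) = (x-1)(x-qt^{-1})/((x-q)(x-t^{-1})), is a symmetric rational function of the form f(z_1,...,z_n) · ∏_{1≤i≠j≤n} (1 - z_i/z_j)/((1 - q z_i/z_j)(1 - z_i/(t z_j))) where f is a symmetric Laurent polynomial satisfying the wheel conditions: f(xq/t, xq, x, z_4,...,z_n) = 0 and f(xq/t, x/t, x, z_4,...,z_n) = 0. -/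
/-!
Each factor splits as `ζ(z_i/z_j) = (z_i - q t⁻¹ z_j)/z_i · g(z_j/z_i)` with
`g(x) = (1-x)/((1-qx)(1-x/t))`. Reindexing the `g`-factors by `(i,j) ↦ (j,i)` and using
`∏_{i≠j} z_i = (∏ z)^{n-1}` gives the factorization. A permutation of the variables permutes the
off-diagonal pairs, so `f` is symmetric, and both wheel specializations kill the factor
`z_1 - q t⁻¹ z_3`.
-/

open Finset

/-- `ζ(x) = (x-1)(x-qt⁻¹)/((x-q)(x-t⁻¹))`. -/
noncomputable def zetaQT {K : Type*} [Field K] (q t x : K) : K :=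
  (x - 1) * (x - q * t⁻¹) / ((x - q) * (x - t⁻¹))

/-- `α = (1-qt⁻¹)/((1-q)(1-t⁻¹))`. -/
noncomputable def alphaQT {K : Type*} [Field K] (q t : K) : K :=
  (1 - q * t⁻¹) / ((1 - q) * (1 - t⁻¹))

/-- `F_n(z₁,…,z_n) = αⁿ ∏_{1≤i≠j≤n} ζ(z_i/z_j)`. -/
noncomputable def Fsh {K : Type*} [Field K] (q t : K) (n : ℕ) (z : Fin n → K) : K :=
  alphaQT q t ^ n * ∏ p ∈ Finset.univ.offDiag, zetaQT q t (z p.1 / z p.2)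

/-- The symmetric Laurent polynomial `f(z₁,…,z_n) = αⁿ (∏ₖ z_k)^{-(n-1)} ∏_{i≠j}(z_i - qt⁻¹ z_j)`
obtained by dividing `F_n` by `∏_{i≠j} (1-z_i/z_j)/((1-q z_i/z_j)(1-z_i/(t z_j)))`. -/
noncomputable def fWheel {K : Type*} [Field K] (q t : K) (n : ℕ) (z : Fin n → K) : K :=
  alphaQT q t ^ n * ((∏ k, z k) ^ (n - 1))⁻¹ *
    ∏ p ∈ Finset.univ.offDiag, (z p.1 - q * t⁻¹ * z p.2)

namespace Finset

variable {α M : Type*} [CommMonoid M]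

theorem prod_offDiag_swap (s : Finset α) (f : α × α → M) :
    ∏ p ∈ s.offDiag, f p.swap = ∏ p ∈ s.offDiag, f p :=
  prod_nbij' Prod.swap Prod.swap (by simp +contextual [ne_comm]) (by simp +contextual [ne_comm])
    (by simp) (by simp) (by simp)

theorem prod_offDiag_fst [DecidableEq α] (s : Finset α) (f : α → M) :
    ∏ p ∈ s.offDiag, f p.1 = (∏ i ∈ s, f i) ^ (#s - 1) := by
  have h : s.offDiag = (s ×ˢ s).filter fun p => p.1 ≠ p.2 := by ext; simp [and_assoc]
  rw [h, prod_filter, prod_product, ← prod_pow]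
  refine prod_congr rfl fun i hi => ?_
  rw [← prod_filter, filter_ne]
  simp only [prod_const, card_erase_of_mem hi]

theorem prod_offDiag_univ_perm [Fintype α] (σ : Equiv.Perm α) (f : α → α → M) :
    ∏ p ∈ univ.offDiag, f (σ p.1) (σ p.2) = ∏ p ∈ univ.offDiag, f p.1 p.2 :=
  prod_nbij' (Prod.map σ σ) (Prod.map σ.symm σ.symm) (by simp) (by simp) (by simp) (by simp)
    (by simp)

end Finset

section Wheel

variable {K : Type*} [Field K] (q t : K)

theorem zetaQT_div_eq {a b : K} (ha : a ≠ 0) (hb : b ≠ 0) :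
    zetaQT q t (a / b) =
      (a - q * t⁻¹ * b) / a * ((1 - b / a) / ((1 - q * (b / a)) * (1 - b / (t * a)))) := by
  rw [zetaQT]
  field_simp

theorem fWheel_eq_prod {n : ℕ} (z : Fin n → K) :
    fWheel q t n z =
      alphaQT q t ^ n * ∏ p ∈ univ.offDiag, (z p.1 - q * t⁻¹ * z p.2) / z p.1 := by
  rw [fWheel, prod_div_distrib, prod_offDiag_fst, card_univ, Fintype.card_fin]
  ring

theorem Fsh_eq_fWheel_mul {n : ℕ} (z : Fin n → K) (hz : ∀ i, z i ≠ 0) :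
    Fsh q t n z = fWheel q t n z *
      ∏ p ∈ univ.offDiag,
        ((1 - z p.1 / z p.2) / ((1 - q * (z p.1 / z p.2)) * (1 - z p.1 / (t * z p.2)))) := by
  rw [Fsh, fWheel_eq_prod, mul_assoc, ← prod_offDiag_swap _ fun p : Fin n × Fin n =>
    (1 - z p.1 / z p.2) / ((1 - q * (z p.1 / z p.2)) * (1 - z p.1 / (t * z p.2))),
    ← prod_mul_distrib]
  congr 1
  exact prod_congr rfl fun p _ => zetaQT_div_eq q t (hz _) (hz _)

theorem fWheel_comp_perm {n : ℕ} (σ : Equiv.Perm (Fin n)) (z : Fin n → K) :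
    fWheel q t n (z ∘ σ) = fWheel q t n z := by
  simp only [fWheel, Function.comp_apply, Equiv.prod_comp]
  rw [prod_offDiag_univ_perm σ fun i j => z i - q * t⁻¹ * z j]

theorem fWheel_eq_zero {n : ℕ} {z : Fin n → K} {i j : Fin n} (hij : i ≠ j)
    (h : z i = q * t⁻¹ * z j) : fWheel q t n z = 0 :=
  mul_eq_zero_of_right _ <| prod_eq_zero (i := (i, j))
    (mem_offDiag.2 ⟨mem_univ i, mem_univ j, hij⟩) (sub_eq_zero_of_eq h)

end Wheel

/-- `F_n` is of the form `f · ∏_{i≠j} (1-z_i/z_j)/((1-qz_i/z_j)(1-z_i/(tz_j)))` where `f` is the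
symmetric Laurent polynomial `fWheel`, which satisfies the wheel conditions
`f(xq/t, xq, x, …) = 0` and `f(xq/t, x/t, x, …) = 0`. -/
theorem Fsh_wheel_form {K : Type*} [Field K] (q t : K) (n : ℕ) (hn : 3 ≤ n) :
    (∀ z : Fin n → K, (∀ i, z i ≠ 0) →
      (∀ i j : Fin n, i ≠ j → z i ≠ z j ∧ z i - q * z j ≠ 0 ∧ z i - t⁻¹ * z j ≠ 0) →
      Fsh q t n z = fWheel q t n z *
        ∏ p ∈ Finset.univ.offDiag,
          ((1 - z p.1 / z p.2) / ((1 - q * (z p.1 / z p.2)) * (1 - z p.1 / (t * z p.2))))) ∧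
    (∀ (σ : Equiv.Perm (Fin n)) (z : Fin n → K), fWheel q t n (z ∘ σ) = fWheel q t n z) ∧
    (∀ (x : K) (z : Fin n → K), z ⟨0, by omega⟩ = x * q * t⁻¹ → z ⟨1, by omega⟩ = x * q →
      z ⟨2, by omega⟩ = x → fWheel q t n z = 0) ∧
    (∀ (x : K) (z : Fin n → K), z ⟨0, by omega⟩ = x * q * t⁻¹ → z ⟨1, by omega⟩ = x * t⁻¹ →
      z ⟨2, by omega⟩ = x → fWheel q t n z = 0) := by
  have h02 : (⟨0, by omega⟩ : Fin n) ≠ ⟨2, by omega⟩ := by simp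
  refine ⟨fun z hz _ => Fsh_eq_fWheel_mul q t z hz, fWheel_comp_perm q t, ?_, ?_⟩ <;>
  · intro x z h0 _ h2
    exact fWheel_eq_zero q t h02 (by rw [h0, h2]; ring)
end

section
/- For the geometric torus action on moduli of rank-r framed sheaves: the Laurent polynomial character χ(q_1,q_2,u_1,…,u_r) = Σ_{i,j=1}^r Σ_{□∈λ^i} ( (u_j/u_i) q_1^{-a_□(λ^i)-1} q_2^{l_□(λ^j)} + (u_i/u_j) q_1^{a_□(λ^i)} q_2^{-l_□(λ^j)-1} ) satisfies χ(q_1^{-1}, q_2^{-1}, u_1^{-1},…,u_r^{-1}) = q_1 q_2 · χ(q_1, q_2, u_1,…,u_r), reflecting that the tangent space is a symplectic representation with form of weight q_1 q_2. -/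
open Finset

/-- The torus character of the tangent space to the moduli of rank-`r` framed sheaves at the
fixed point `F_{λ¹,…,λʳ}`:
`χ = Σ_{a,b=1}^{r} Σ_{□∈λᵃ} ( (u_b/u_a) q₁^{-arm_□(λᵃ)-1} q₂^{leg_□(λᵇ)}
   + (u_a/u_b) q₁^{arm_□(λᵃ)} q₂^{-leg_□(λᵇ)-1} )`,
where the partition `λᵏ` has length `L k` and parts `lam k 0 ≥ lam k 1 ≥ …`, the box
`□ = (i,j)` (0-indexed) of `λᵃ` has generalized arm `lam a i - j - 1 ∈ ℤ` and generalized leg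
`(λᵇ)'_j - i - 1 ∈ ℤ` (possibly negative). -/
noncomputable def charModuli {K : Type*} [Field K] (r : ℕ) (q1 q2 : K) (u : Fin r → K)
    (L : Fin r → ℕ) (lam : Fin r → ℕ → ℕ) : K :=
  ∑ a : Fin r, ∑ b : Fin r, ∑ i ∈ range (L a), ∑ j ∈ range (lam a i),
    (u b / u a * q1 ^ (-((lam a i : ℤ) - (j + 1)) - 1) *
        q2 ^ (((((range (L b)).filter fun k => j + 1 ≤ lam b k).card : ℤ) - (i + 1))) +
      u a / u b * q1 ^ ((lam a i : ℤ) - (j + 1)) *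
        q2 ^ (-((((range (L b)).filter fun k => j + 1 ≤ lam b k).card : ℤ) - (i + 1)) - 1))

/-!
The two summands attached to a box are a weight `w` and its dual `(q₁q₂w)⁻¹`
with respect to a form of weight `q₁q₂`. Inverting the torus variables sends `w` to `w⁻¹`,
and `w⁻¹ + q₁q₂w = q₁q₂ (w + (q₁q₂w)⁻¹)`, so the character is symplectic box by box.
-/

section
variable {K : Type*} [Field K]

theorem inv_add_inv_mul_inv_inv_eq (t w : K) (ht : t ≠ 0) :
    w⁻¹ + (t⁻¹ * w⁻¹)⁻¹ = t * (w + (t * w)⁻¹) := by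
  rw [mul_inv, inv_inv, inv_inv, mul_add, mul_inv, ← mul_assoc, mul_inv_cancel₀ ht, one_mul,
    add_comm]

theorem monomial_inv_variables (q1 q2 a b : K) (A B : ℤ) :
    b⁻¹ / a⁻¹ * q1⁻¹ ^ A * q2⁻¹ ^ B = (b / a * q1 ^ A * q2 ^ B)⁻¹ := by
  rw [inv_zpow', inv_zpow', mul_inv, mul_inv, inv_div, inv_div_inv, zpow_neg, zpow_neg]

theorem monomial_dual {q1 q2 a b : K} (h1 : q1 ≠ 0) (h2 : q2 ≠ 0) (ha : a ≠ 0) (hb : b ≠ 0)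
    (A B : ℤ) :
    a / b * q1 ^ A * q2 ^ (-B - 1) = (q1 * q2 * (b / a * q1 ^ (-A - 1) * q2 ^ B))⁻¹ := by
  simp only [sub_eq_add_neg, zpow_add₀ h1, zpow_add₀ h2, zpow_neg, zpow_one]
  field_simp

theorem charModuli_summand_inv_variables {q1 q2 a b : K} (h1 : q1 ≠ 0) (h2 : q2 ≠ 0) (ha : a ≠ 0)
    (hb : b ≠ 0) (A B : ℤ) :
    b⁻¹ / a⁻¹ * q1⁻¹ ^ (-A - 1) * q2⁻¹ ^ B + a⁻¹ / b⁻¹ * q1⁻¹ ^ A * q2⁻¹ ^ (-B - 1)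
      = q1 * q2 * (b / a * q1 ^ (-A - 1) * q2 ^ B + a / b * q1 ^ A * q2 ^ (-B - 1)) := by
  have hdual := monomial_dual h1 h2 ha hb A B
  have hdual_inv := monomial_dual (inv_ne_zero h1) (inv_ne_zero h2) (inv_ne_zero ha)
    (inv_ne_zero hb) A B
  rw [hdual, hdual_inv, monomial_inv_variables, ← mul_inv,
    inv_add_inv_mul_inv_inv_eq _ _ (mul_ne_zero h1 h2)]

end

theorem charModuli_symplectic_general {K : Type*} [Field K] (r : ℕ) (q1 q2 : K) (u : Fin r → K)
    (h1 : q1 ≠ 0) (h2 : q2 ≠ 0) (hu : ∀ a, u a ≠ 0)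
    (L : Fin r → ℕ) (lam : Fin r → ℕ → ℕ) :
    charModuli r q1⁻¹ q2⁻¹ (fun a => (u a)⁻¹) L lam
      = q1 * q2 * charModuli r q1 q2 u L lam := by
  simp only [charModuli, mul_sum]
  refine sum_congr rfl fun a _ => sum_congr rfl fun b _ =>
    sum_congr rfl fun i _ => sum_congr rfl fun j _ => ?_
  exact charModuli_summand_inv_variables h1 h2 (hu a) (hu b) _ _

/-- The tangent character is a symplectic representation with form of weight `q₁q₂`:
inverting all torus variables gives `χ(q₁⁻¹,q₂⁻¹,u⁻¹) = q₁ q₂ · χ(q₁,q₂,u)`. -/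
theorem charModuli_symplectic {K : Type*} [Field K] (r : ℕ) (q1 q2 : K) (u : Fin r → K)
    (h1 : q1 ≠ 0) (h2 : q2 ≠ 0) (hu : ∀ a, u a ≠ 0)
    (L : Fin r → ℕ) (lam : Fin r → ℕ → ℕ)
    (hmono : ∀ a i j, i ≤ j → lam a j ≤ lam a i)
    (hvan : ∀ a i, L a ≤ i → lam a i = 0) :
    charModuli r q1⁻¹ q2⁻¹ (fun a => (u a)⁻¹) L lam
      = q1 * q2 * charModuli r q1 q2 u L lam :=
  charModuli_symplectic_general r q1 q2 u h1 h2 hu L lam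
end
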